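/- arXiv:math/0504374 — 3 statements merged into one kernel-verified Lean document; each statement's English description precedes it below -/
import Mathlib

section
/- Let U be an (m+n)-by-(m+n) unitary matrix written in block form U = [[A, B], [C, D]] where A is m-by-m and D is n-by-n. For z in the open unit disk, define the transfer function Ψ(z) = A + zB(I − zD)^{-1}C (note I − zD is invertible since ‖D‖ ≤ 1 and |z| < 1). Then for all z in the open unit disk, I − Ψ(z)*Ψ(z) = (1 − |z|²) C*(I − z̄D*)^{-1}(I − zD)^{-1}C. -/
/-!
Put `R = (1 - z D)⁻¹ C`. Since `C + D (z R) = R`, the unitary `U` maps the block column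
`[1; z R]` to `[Ψ(z); R]`, so comparing Gram matrices gives `1 + |z|² R* R = Ψ(z)* Ψ(z) + R* R`,
which rearranges to the claim. The same comparison on `[0; 1]` gives `B* B + D* D = 1`, so `D` is a
contraction and `1 - z D` is invertible for `|z| < 1`.
-/

open Matrix

namespace Matrix

section Isometry

variable {α m n k : Type*} [CommRing α] [StarRing α] [Fintype m] [Fintype n]

theorem conjTranspose_fromRows_mul_fromRows (X : Matrix m k α) (Y : Matrix n k α) :
    (fromRows X Y)ᴴ * fromRows X Y = Xᴴ * X + Yᴴ * Y := by
  rw [conjTranspose_fromRows_eq_fromCols_conjTranspose, fromCols_mul_fromRows]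

variable [DecidableEq m] [DecidableEq n]

theorem fromBlocks_mem_unitaryGroup_isometry {A : Matrix m m α} {B : Matrix m n α}
    {C : Matrix n m α} {D : Matrix n n α} (hU : fromBlocks A B C D ∈ unitaryGroup (m ⊕ n) α)
    (X : Matrix m k α) (Y : Matrix n k α) :
    (A * X + B * Y)ᴴ * (A * X + B * Y) + (C * X + D * Y)ᴴ * (C * X + D * Y) =
      Xᴴ * X + Yᴴ * Y := by
  rw [← conjTranspose_fromRows_mul_fromRows, ← conjTranspose_fromRows_mul_fromRows,
    ← fromBlocks_mul_fromRows, conjTranspose_mul, Matrix.mul_assoc,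
    ← Matrix.mul_assoc _ (fromBlocks _ _ _ _), ← star_eq_conjTranspose,
    (mem_unitaryGroup_iff').1 hU, Matrix.one_mul]

end Isometry

variable {𝕜 m n : Type*} [RCLike 𝕜] [Fintype n]

theorem star_smul_dotProduct_smul (z : 𝕜) (v : n → 𝕜) :
    star (z • v) ⬝ᵥ (z • v) = (‖z‖ ^ 2 : ℝ) • (star v ⬝ᵥ v) := by
  rw [star_smul, smul_dotProduct, dotProduct_smul, smul_smul, RCLike.star_def, RCLike.conj_mul,
    RCLike.real_smul_eq_coe_mul, smul_eq_mul]
  push_cast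
  ring

theorem conjTranspose_smul_mul_smul (z : 𝕜) (R : Matrix n m 𝕜) :
    (z • R)ᴴ * (z • R) = ((‖z‖ : 𝕜) ^ 2) • (Rᴴ * R) := by
  rw [conjTranspose_smul, Matrix.smul_mul, Matrix.mul_smul, smul_smul, RCLike.star_def,
    RCLike.conj_mul]

variable [DecidableEq n]

open scoped ComplexOrder in
theorem isUnit_det_one_sub_smul_of_posSemidef {D : Matrix n n 𝕜}
    (hD : (1 - Dᴴ * D).PosSemidef) {z : 𝕜} (hz : ‖z‖ < 1) : IsUnit (1 - z • D).det := by
  rw [isUnit_iff_ne_zero, Ne, ← exists_mulVec_eq_zero_iff]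
  rintro ⟨v, hv0, hv⟩
  set w := D *ᵥ v
  have hfix : v = z • w := by
    rwa [sub_mulVec, one_mulVec, smul_mulVec, sub_eq_zero] at hv
  have hle : star w ⬝ᵥ w ≤ star v ⬝ᵥ v := by
    have := hD.dotProduct_mulVec_nonneg v
    rwa [sub_mulVec, one_mulVec, dotProduct_sub, ← mulVec_mulVec, dotProduct_mulVec,
      vecMul_conjTranspose, star_star, sub_nonneg] at this
  rw [hfix, star_smul_dotProduct_smul] at hle
  have hw : star w ⬝ᵥ w = 0 := by
    have hpos : (0 : ℝ) < 1 - ‖z‖ ^ 2 := by nlinarith [norm_nonneg z]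
    have hzero : (1 - ‖z‖ ^ 2) • (star w ⬝ᵥ w) = 0 :=
      le_antisymm (by rwa [sub_smul, one_smul, sub_nonpos])
        (smul_nonneg hpos.le (dotProduct_star_self_nonneg w))
    exact (smul_eq_zero.1 hzero).resolve_left hpos.ne'
  exact hv0 (by rw [hfix, dotProduct_star_self_eq_zero.1 hw, smul_zero])

variable [Fintype m] [DecidableEq m]

theorem one_sub_conjTranspose_mul_self_transfer {A : Matrix m m 𝕜} {B : Matrix m n 𝕜}
    {C : Matrix n m 𝕜} {D : Matrix n n 𝕜} (hU : fromBlocks A B C D ∈ unitaryGroup (m ⊕ n) 𝕜)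
    {z : 𝕜} {R : Matrix n m 𝕜} (hR : (1 - z • D) * R = C) :
    1 - (A + z • (B * R))ᴴ * (A + z • (B * R)) = ((1 - ‖z‖ ^ 2 : ℝ) : 𝕜) • (Rᴴ * R) := by
  have hstate : C * (1 : Matrix m m 𝕜) + D * (z • R) = R := by
    rw [Matrix.mul_one, ← hR, Matrix.sub_mul, Matrix.one_mul, Matrix.mul_smul, Matrix.smul_mul,
      sub_add_cancel]
  have h := fromBlocks_mem_unitaryGroup_isometry hU 1 (z • R)
  rw [hstate, Matrix.mul_one, Matrix.mul_smul, conjTranspose_one, Matrix.one_mul,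
    conjTranspose_smul_mul_smul] at h
  rw [eq_sub_of_add_eq h.symm]
  push_cast
  module

end Matrix

theorem transfer_function_identity (m n : ℕ)
    (A : Matrix (Fin m) (Fin m) ℂ) (B : Matrix (Fin m) (Fin n) ℂ)
    (C : Matrix (Fin n) (Fin m) ℂ) (D : Matrix (Fin n) (Fin n) ℂ)
    (hU : Matrix.fromBlocks A B C D ∈ Matrix.unitaryGroup (Fin m ⊕ Fin n) ℂ)
    (z : ℂ) (hz : ‖z‖ < 1) :
    (1 : Matrix (Fin m) (Fin m) ℂ) -
      (A + z • (B * (1 - z • D)⁻¹ * C))ᴴ * (A + z • (B * (1 - z • D)⁻¹ * C)) =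
    (((1 - ‖z‖ ^ 2 : ℝ) : ℂ)) •
      (Cᴴ * (1 - (starRingEnd ℂ z) • Dᴴ)⁻¹ * ((1 - z • D)⁻¹ * C)) := by
  have hBD : Bᴴ * B + Dᴴ * D = 1 := by
    simpa using fromBlocks_mem_unitaryGroup_isometry hU 0 (1 : Matrix (Fin n) (Fin n) ℂ)
  have hE : IsUnit (1 - z • D).det := by
    refine isUnit_det_one_sub_smul_of_posSemidef ?_ hz
    rw [← hBD, add_sub_cancel_right]
    open scoped ComplexOrder in exact posSemidef_conjTranspose_mul_self B
  have hR : (1 - z • D) * ((1 - z • D)⁻¹ * C) = C := mul_nonsing_inv_cancel_left _ _ hE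
  have hRstar : ((1 - z • D)⁻¹ * C)ᴴ = Cᴴ * (1 - (starRingEnd ℂ z) • Dᴴ)⁻¹ := by
    rw [conjTranspose_mul, conjTranspose_nonsing_inv, conjTranspose_sub, conjTranspose_one,
      conjTranspose_smul, Complex.star_def]
  rw [← hRstar, Matrix.mul_assoc B]
  exact one_sub_conjTranspose_mul_self_transfer hU hR
end

section
/- Let U = [[A, B], [C, D]] be a block unitary on ℂ^m ⊕ ℂ^n with transfer function Ψ(z) = A + zB(I − zD)^{-1}C, and let Ψ'(w) = D* + wB*(I − wA*)^{-1}C*. Then for z, w in the open unit disk with (I − zD) and (I − wA*) invertible, det(Ψ(z) − wI) = 0 if and only if det(Ψ'(w) − zI) = 0. -/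
/-!
Write `P = diag(1, z)` and `Q = diag(w, 1)`. By Schur complements on the `(2,2)` block,
`det(Ψ(z) - w)` vanishes exactly when the pencil `K = U P - Q` is singular, and `det(Ψ'(w) - z)`
vanishes exactly when the analogous pencil of the colligation `(Dᴴ, Bᴴ, Cᴴ, Aᴴ)` is singular.
That second pencil is `Uᴴ Q - P` with its two blocks swapped, and unitarity gives
`Uᴴ Q - P = -Uᴴ K`.
-/

open Matrix

namespace Matrix

variable {m n R : Type*} [Fintype m] [Fintype n] [DecidableEq m] [DecidableEq n] [CommRing R]

theorem det_fromBlocks_eq_zero_iff_of_isUnit₂₂ {A : Matrix m m R} {B : Matrix m n R}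
    {C : Matrix n m R} {D : Matrix n n R} (hD : IsUnit D) :
    (fromBlocks A B C D).det = 0 ↔ (A - B * D⁻¹ * C).det = 0 := by
  have := hD.invertible
  rw [det_fromBlocks₂₂, invOf_eq_nonsing_inv, ((isUnit_iff_isUnit_det D).mp hD).mul_right_eq_zero]

noncomputable def transferFunction (A : Matrix m m R) (B : Matrix m n R) (C : Matrix n m R)
    (D : Matrix n n R) (z : R) : Matrix m m R :=
  A + z • (B * (1 - z • D)⁻¹ * C)

theorem det_transferFunction_sub_eq_zero_iff {A : Matrix m m R} {B : Matrix m n R}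
    {C : Matrix n m R} {D : Matrix n n R} {z : R} (w : R) (hzD : IsUnit (1 - z • D)) :
    (transferFunction A B C D z - w • 1).det = 0 ↔
      (fromBlocks (A - w • 1) (z • B) C (z • D - 1)).det = 0 := by
  have hinv : (z • D - 1)⁻¹ = -(1 - z • D)⁻¹ := inv_eq_right_inv <| by
    rw [← neg_sub, neg_mul_neg, mul_nonsing_inv _ ((isUnit_iff_isUnit_det _).mp hzD)]
  rw [det_fromBlocks_eq_zero_iff_of_isUnit₂₂ (by simpa only [neg_sub] using hzD.neg), hinv,
    transferFunction]
  congr! 2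
  simp only [Matrix.smul_mul, Matrix.mul_neg, Matrix.neg_mul, sub_neg_eq_add, Matrix.mul_assoc]
  abel

theorem fromBlocks_pencil_eq_mul_sub (A : Matrix m m R) (B : Matrix m n R) (C : Matrix n m R)
    (D : Matrix n n R) (z w : R) :
    fromBlocks (A - w • 1) (z • B) C (z • D - 1) =
      fromBlocks A B C D * fromBlocks 1 0 0 (z • 1) - fromBlocks (w • 1) 0 0 1 := by
  simp [fromBlocks_multiply, sub_eq_add_neg, fromBlocks_neg, fromBlocks_add]

theorem det_fromBlocks_pencil_eq_zero_iff_of_mem_unitaryGroup [StarRing R] {A : Matrix m m R}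
    {B : Matrix m n R} {C : Matrix n m R} {D : Matrix n n R}
    (hU : fromBlocks A B C D ∈ unitaryGroup (m ⊕ n) R) (z w : R) :
    (fromBlocks (A - w • 1) (z • B) C (z • D - 1)).det = 0 ↔
      (fromBlocks (Dᴴ - z • 1) (w • Bᴴ) Cᴴ (w • Aᴴ - 1)).det = 0 := by
  set U := fromBlocks A B C D
  set P : Matrix (m ⊕ n) (m ⊕ n) R := fromBlocks 1 0 0 (z • 1)
  set Q : Matrix (m ⊕ n) (m ⊕ n) R := fromBlocks (w • 1) 0 0 1
  have hdual : fromBlocks (Dᴴ - z • 1) (w • Bᴴ) Cᴴ (w • Aᴴ - 1) =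
      (Uᴴ * Q - P).submatrix (Equiv.sumComm n m) (Equiv.sumComm n m) := by
    rw [fromBlocks_pencil_eq_mul_sub]
    simp [U, P, Q, fromBlocks_conjTranspose, fromBlocks_multiply, sub_eq_add_neg, fromBlocks_neg,
      fromBlocks_add]
  have hUQP : Uᴴ * Q - P = -(Uᴴ * (U * P - Q)) := by
    rw [Matrix.mul_sub, ← Matrix.mul_assoc, ← star_eq_conjTranspose, mem_unitaryGroup_iff'.mp hU,
      Matrix.one_mul, neg_sub]
  have hUdet : IsUnit Uᴴ.det := IsUnit.of_mul_eq_one _ <| by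
    rw [← det_mul, ← star_eq_conjTranspose, mem_unitaryGroup_iff'.mp hU, det_one]
  rw [fromBlocks_pencil_eq_mul_sub, hdual, det_submatrix_equiv_self, hUQP, det_neg, det_mul,
    (isUnit_neg_one.pow _).mul_right_eq_zero, hUdet.mul_right_eq_zero]

end Matrix

theorem transfer_functions_isospectral_general (m n : ℕ)
    (A : Matrix (Fin m) (Fin m) ℂ) (B : Matrix (Fin m) (Fin n) ℂ)
    (C : Matrix (Fin n) (Fin m) ℂ) (D : Matrix (Fin n) (Fin n) ℂ)
    (hU : Matrix.fromBlocks A B C D ∈ Matrix.unitaryGroup (Fin m ⊕ Fin n) ℂ)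
    (z w : ℂ)
    (hinvz : IsUnit ((1 : Matrix (Fin n) (Fin n) ℂ) - z • D))
    (hinvw : IsUnit ((1 : Matrix (Fin m) (Fin m) ℂ) - w • Aᴴ)) :
    ((A + z • (B * (1 - z • D)⁻¹ * C)) - w • 1).det = 0 ↔
    ((Dᴴ + w • (Bᴴ * (1 - w • Aᴴ)⁻¹ * Cᴴ)) - z • 1).det = 0 :=
  (det_transferFunction_sub_eq_zero_iff w hinvz).trans <|
    (det_fromBlocks_pencil_eq_zero_iff_of_mem_unitaryGroup hU z w).trans
      (det_transferFunction_sub_eq_zero_iff z hinvw).symm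

theorem transfer_functions_isospectral (m n : ℕ)
    (A : Matrix (Fin m) (Fin m) ℂ) (B : Matrix (Fin m) (Fin n) ℂ)
    (C : Matrix (Fin n) (Fin m) ℂ) (D : Matrix (Fin n) (Fin n) ℂ)
    (hU : Matrix.fromBlocks A B C D ∈ Matrix.unitaryGroup (Fin m ⊕ Fin n) ℂ)
    (z w : ℂ) (hz : ‖z‖ < 1) (hw : ‖w‖ < 1)
    (hinvz : IsUnit ((1 : Matrix (Fin n) (Fin n) ℂ) - z • D))
    (hinvw : IsUnit ((1 : Matrix (Fin m) (Fin m) ℂ) - w • Aᴴ)) :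
    ((A + z • (B * (1 - z • D)⁻¹ * C)) - w • 1).det = 0 ↔
    ((Dᴴ + w • (Bᴴ * (1 - w • Aᴴ)⁻¹ * Cᴴ)) - z • 1).det = 0 :=
  transfer_functions_isospectral_general m n A B C D hU z w hinvz hinvw
end

section
/- Let U = [[A, B], [C, D]] and U₁ = [[A₁, B₁], [C₁, D₁]] be block unitary matrices on ℂ^m ⊕ ℂ^n with A = A₁ and B an invertible n = m square matrix. If A = A₁, BC = B₁C₁, BDC = B₁D₁C₁, and BDⁿC = B₁D₁ⁿC₁ for all n, then W := B^{-1}B₁ is unitary and satisfies B₁ = BW, C₁ = W*C, D₁ = W*DW. -/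
open Matrix

theorem gauge_from_moments (m : ℕ)
    (A A₁ B B₁ C C₁ D D₁ : Matrix (Fin m) (Fin m) ℂ)
    (hU : Matrix.fromBlocks A B C D ∈ Matrix.unitaryGroup (Fin m ⊕ Fin m) ℂ)
    (hU₁ : Matrix.fromBlocks A₁ B₁ C₁ D₁ ∈ Matrix.unitaryGroup (Fin m ⊕ Fin m) ℂ)
    (hA : A = A₁) (hB : IsUnit B.det)
    (hmom : ∀ k : ℕ, B * D ^ k * C = B₁ * D₁ ^ k * C₁) :
    B⁻¹ * B₁ ∈ Matrix.unitaryGroup (Fin m) ℂ ∧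
      B₁ = B * (B⁻¹ * B₁) ∧ C₁ = (B⁻¹ * B₁)ᴴ * C ∧ D₁ = (B⁻¹ * B₁)ᴴ * D * (B⁻¹ * B₁) := by
  have hBinv : B * B⁻¹ = 1 := mul_nonsing_inv B hB
  have hBinv' : B⁻¹ * B = 1 := nonsing_inv_mul B hB
  have hBH : IsUnit Bᴴ.det := by rw [Matrix.det_conjTranspose]; exact hB.star
  have hBHinv : Bᴴ * Bᴴ⁻¹ = 1 := mul_nonsing_inv Bᴴ hBH
  have h1 := Matrix.mem_unitaryGroup_iff.mp hU
  have h2 := Matrix.mem_unitaryGroup_iff.mp hU₁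
  rw [Matrix.star_eq_conjTranspose, Matrix.fromBlocks_conjTranspose,
    Matrix.fromBlocks_multiply, ← Matrix.fromBlocks_one] at h1 h2
  have e11 := congrArg Matrix.toBlocks₁₁ h1
  have e21 := congrArg Matrix.toBlocks₂₁ h1
  have e11' := congrArg Matrix.toBlocks₁₁ h2
  have e21' := congrArg Matrix.toBlocks₂₁ h2
  simp only [Matrix.toBlocks_fromBlocks₁₁, Matrix.toBlocks_fromBlocks₂₁] at e11 e21 e11' e21'
  subst hA
  have hBB : B * Bᴴ = B₁ * B₁ᴴ := by
    have := e11.trans e11'.symm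
    exact add_left_cancel this
  have hWW : (B⁻¹ * B₁) * ((B⁻¹ * B₁))ᴴ = 1 := by
    rw [Matrix.conjTranspose_mul, Matrix.conjTranspose_nonsing_inv]
    calc B⁻¹ * B₁ * (B₁ᴴ * Bᴴ⁻¹) = B⁻¹ * (B₁ * B₁ᴴ) * Bᴴ⁻¹ := by simp only [mul_assoc]
      _ = B⁻¹ * (B * Bᴴ) * Bᴴ⁻¹ := by rw [hBB]
      _ = 1 := by rw [← mul_assoc, hBinv', one_mul, hBHinv]
  have hmem : B⁻¹ * B₁ ∈ Matrix.unitaryGroup (Fin m) ℂ := by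
    rw [Matrix.mem_unitaryGroup_iff, Matrix.star_eq_conjTranspose]; exact hWW
  have hWsW : ((B⁻¹ * B₁))ᴴ * (B⁻¹ * B₁) = 1 := mul_eq_one_comm.mp hWW
  have hB1 : B₁ = B * (B⁻¹ * B₁) := by rw [← mul_assoc, hBinv, one_mul]
  have hm0 : B * C = B₁ * C₁ := by have := hmom 0; simpa using this
  have hC : C₁ = (B⁻¹ * B₁)ᴴ * C := by
    have hC' : C = (B⁻¹ * B₁) * C₁ := by
      calc C = B⁻¹ * (B * C) := by rw [← mul_assoc, hBinv', one_mul]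
        _ = B⁻¹ * (B₁ * C₁) := by rw [hm0]
        _ = (B⁻¹ * B₁) * C₁ := by rw [mul_assoc]
    rw [hC', ← mul_assoc, hWsW, one_mul]
  have hB1H : B₁ᴴ = (B⁻¹ * B₁)ᴴ * Bᴴ := by
    conv_lhs => rw [hB1]
    rw [Matrix.conjTranspose_mul]
  -- e21 : C * Aᴴ + D * Bᴴ = 0 ; e21' : C₁ * Aᴴ + D₁ * B₁ᴴ = 0
  have hDW : D₁ * (B⁻¹ * B₁)ᴴ = (B⁻¹ * B₁)ᴴ * D := by
    have h3 : D * Bᴴ = -(C * Aᴴ) := eq_neg_of_add_eq_zero_right e21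
    have h3' : D₁ * B₁ᴴ = -(C₁ * Aᴴ) := eq_neg_of_add_eq_zero_right e21'
    have key : D₁ * (B⁻¹ * B₁)ᴴ * Bᴴ = (B⁻¹ * B₁)ᴴ * D * Bᴴ := by
      calc D₁ * (B⁻¹ * B₁)ᴴ * Bᴴ = D₁ * B₁ᴴ := by rw [mul_assoc, ← hB1H]
        _ = -(C₁ * Aᴴ) := h3'
        _ = -((B⁻¹ * B₁)ᴴ * C * Aᴴ) := by rw [hC]
        _ = (B⁻¹ * B₁)ᴴ * (D * Bᴴ) := by rw [h3, mul_neg, mul_assoc]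
        _ = (B⁻¹ * B₁)ᴴ * D * Bᴴ := by rw [mul_assoc]
    have := congrArg (· * Bᴴ⁻¹) key
    simpa [mul_assoc, hBHinv] using this
  refine ⟨hmem, hB1, hC, ?_⟩
  calc D₁ = D₁ * ((B⁻¹ * B₁)ᴴ * (B⁻¹ * B₁)) := by rw [hWsW, mul_one]
    _ = (D₁ * (B⁻¹ * B₁)ᴴ) * (B⁻¹ * B₁) := by rw [mul_assoc]
    _ = (B⁻¹ * B₁)ᴴ * D * (B⁻¹ * B₁) := by rw [hDW]
end
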